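/- Let g : ℝ × ℝ → ℝ be continuous, let Z_{i,j} (i∈{0,1}, j∈{0,…,3}) be real constants, and let Z_{2,j} (j∈{0,…,3}) and Z_{i,4} (i∈{0,1}) be continuous functions on ℝ. Define u(x₁,x₂) by the Taylor-type formula: u(x₁,x₂) = Σ_{i=0}^{1}Σ_{j=0}^{3}(x₁^i/i!)(x₂^j/j!)Z_{i,j} + Σ_{j=0}^{3}(x₂^j/j!)∫₀^{x₁}(x₁-η)Z_{2,j}(η)dη + Σ_{i=0}^{1}(x₁^i/i!)∫₀^{x₂}((x₂-τ)³/6)Z_{i,4}(τ)dτ + ∫₀^{x₁}∫₀^{x₂}(x₁-η)((x₂-τ)³/6)g(η,τ)dτdη. Then D₁²D₂⁴u = g and u satisfies all the non-classical Goursat conditions (4) with the given data. -/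

import Mathlib

/-!
In each variable separately, `u` is a Taylor polynomial at `0` plus Cauchy's repeated integral
`∫₀ˣ (x - t)ⁿ / n! f(t) dt` of a continuous remainder `f`: by Fubini,
`u(x₁, ·) = ∑_{j ≤ 3} V_j(x₁) x₂ʲ / j! + I³[W(x₁, ·)]`, where
`V_j(x₁) = Z_{0,j} + x₁ Z_{1,j} + I¹[Z_{2,j}](x₁)` and
`W(x₁, τ) = Z_{4,0}(τ) + x₁ Z_{4,1}(τ) + I¹[g(·, τ)](x₁)`.
Since `(Iⁿ⁺¹ f)' = Iⁿ f` and `(I⁰ f)' = f`, the `k`-th derivative of such a form at `0` is its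
`k`-th coefficient for `k ≤ n`, and its `(n + 1)`-st derivative is the remainder. Applying this
first in `x₂` and then in `x₁` gives every claim.
-/

open intervalIntegral

/-- Mixed partial derivative `D₁^i D₂^j u`. -/
noncomputable def Dmix (i j : ℕ) (u : ℝ → ℝ → ℝ) : ℝ → ℝ → ℝ :=
  fun x₁ x₂ => iteratedDeriv i (fun s => iteratedDeriv j (u s) x₂) x₁

open Nat

/-- Cauchy's formula for the `(n + 1)`-fold iterated integral of `f` from `0`. -/
noncomputable def repeatedPrimitive (n : ℕ) (f : ℝ → ℝ) (x : ℝ) : ℝ :=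
  ∫ t in (0:ℝ)..x, (x - t) ^ n / n ! * f t

noncomputable def taylorForm (n : ℕ) (c : ℕ → ℝ) (f : ℝ → ℝ) (x : ℝ) : ℝ :=
  ∑ j ∈ Finset.range (n + 1), c j * (x ^ j / j !) + repeatedPrimitive n f x

section RepeatedPrimitive

variable {f : ℝ → ℝ}

@[simp]
lemma repeatedPrimitive_apply_zero (n : ℕ) (f : ℝ → ℝ) : repeatedPrimitive n f 0 = 0 :=
  integral_same

lemma hasDerivAt_repeatedPrimitive_zero (hf : Continuous f) (x : ℝ) :
    HasDerivAt (repeatedPrimitive 0 f) (f x) x := by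
  have h : repeatedPrimitive 0 f = fun y => ∫ t in (0:ℝ)..y, f t := by
    funext y
    simp [repeatedPrimitive]
  exact h ▸ (hf.integral_hasStrictDerivAt 0 x).hasDerivAt

lemma succ_mul_repeatedPrimitive_succ (hf : Continuous f) (n : ℕ) (x : ℝ) :
    (n + 1) * repeatedPrimitive (n + 1) f x
      = x * repeatedPrimitive n f x - repeatedPrimitive n (fun t => t * f t) x := by
  unfold repeatedPrimitive
  rw [← integral_const_mul, ← integral_const_mul, ← integral_sub
    ((by fun_prop : Continuous _).intervalIntegrable _ _)
    ((by fun_prop : Continuous _).intervalIntegrable _ _)]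
  refine integral_congr fun t _ => ?_
  simp only [factorial_succ, cast_mul, cast_add, cast_one]
  field_simp
  ring

lemma repeatedPrimitive_add {g : ℝ → ℝ} (hf : Continuous f) (hg : Continuous g) (n : ℕ)
    (x : ℝ) : repeatedPrimitive n (fun t => f t + g t) x
      = repeatedPrimitive n f x + repeatedPrimitive n g x := by
  unfold repeatedPrimitive
  simp_rw [mul_add]
  exact integral_add ((by fun_prop : Continuous _).intervalIntegrable _ _)
    ((by fun_prop : Continuous _).intervalIntegrable _ _)

lemma repeatedPrimitive_mul_const (n : ℕ) (f : ℝ → ℝ) (a x : ℝ) :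
    repeatedPrimitive n (fun t => f t * a) x = repeatedPrimitive n f x * a := by
  unfold repeatedPrimitive
  rw [← integral_mul_const]
  simp_rw [mul_assoc]

theorem hasDerivAt_repeatedPrimitive_succ (n : ℕ) (hf : Continuous f) (x : ℝ) :
    HasDerivAt (repeatedPrimitive (n + 1) f) (repeatedPrimitive n f x) x := by
  induction n generalizing f with
  | zero =>
    have h : repeatedPrimitive 1 f = fun y => y * repeatedPrimitive 0 f y
        - repeatedPrimitive 0 (fun t => t * f t) y := by
      funext y
      simpa using succ_mul_repeatedPrimitive_succ hf 0 y
    rw [h]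
    refine (((hasDerivAt_id x).mul (hasDerivAt_repeatedPrimitive_zero hf x)).sub
      (hasDerivAt_repeatedPrimitive_zero (f := fun t => t * f t) (by fun_prop) x)).congr_deriv ?_
    simp
  | succ n ih =>
    have h : repeatedPrimitive (n + 2) f = fun y => (y * repeatedPrimitive (n + 1) f y
        - repeatedPrimitive (n + 1) (fun t => t * f t) y) / (n + 2) := by
      funext y
      rw [← succ_mul_repeatedPrimitive_succ hf]
      push_cast
      field_simp
      ring
    rw [h]
    refine ((((hasDerivAt_id x).mul (ih hf)).sub
      (ih (f := fun t => t * f t) (by fun_prop))).div_const ((n : ℝ) + 2)).congr_deriv ?_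
    rw [id, add_sub_assoc, ← succ_mul_repeatedPrimitive_succ hf]
    field_simp
    ring

end RepeatedPrimitive

section TaylorForm

variable {f : ℝ → ℝ}

lemma hasDerivAt_sum_range_mul_pow_div_factorial (n : ℕ) (c : ℕ → ℝ) (x : ℝ) :
    HasDerivAt (fun y => ∑ j ∈ Finset.range (n + 2), c j * (y ^ j / j !))
      (∑ j ∈ Finset.range (n + 1), c (j + 1) * (x ^ j / j !)) x := by
  have hterm : ∀ j ∈ Finset.range (n + 2), HasDerivAt (fun y => c j * (y ^ j / j !))
      (c j * ((j : ℝ) * x ^ (j - 1) / j !)) x :=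
    fun j _ => ((hasDerivAt_pow j x).div_const _).const_mul _
  refine (HasDerivAt.fun_sum hterm).congr_deriv ?_
  rw [Finset.sum_range_succ']
  simp only [cast_zero, zero_mul, zero_div, mul_zero, add_zero, add_tsub_cancel_right]
  refine Finset.sum_congr rfl fun j _ => ?_
  rw [factorial_succ]
  push_cast
  field_simp

@[simp]
lemma taylorForm_apply_zero (n : ℕ) (c : ℕ → ℝ) (f : ℝ → ℝ) : taylorForm n c f 0 = c 0 := by
  simp [taylorForm, Finset.sum_range_succ']

lemma hasDerivAt_taylorForm_zero (hf : Continuous f) (c : ℕ → ℝ) (x : ℝ) :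
    HasDerivAt (taylorForm 0 c f) (f x) x := by
  have h : taylorForm 0 c f = fun y => c 0 + repeatedPrimitive 0 f y := by
    funext y
    simp [taylorForm]
  exact h ▸ (hasDerivAt_repeatedPrimitive_zero hf x).const_add (c 0)

lemma hasDerivAt_taylorForm_succ (hf : Continuous f) (n : ℕ) (c : ℕ → ℝ) (x : ℝ) :
    HasDerivAt (taylorForm (n + 1) c f) (taylorForm n (fun j => c (j + 1)) f x) x :=
  (hasDerivAt_sum_range_mul_pow_div_factorial n c x).add
    (hasDerivAt_repeatedPrimitive_succ n hf x)

lemma iteratedDeriv_taylorForm_add (hf : Continuous f) (n k : ℕ) (c : ℕ → ℝ) :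
    iteratedDeriv k (taylorForm (n + k) c f) = taylorForm n (fun j => c (j + k)) f := by
  induction k generalizing c with
  | zero => simp
  | succ k ih =>
    rw [iteratedDeriv_succ', ← add_assoc,
      funext fun x => (hasDerivAt_taylorForm_succ hf (n + k) c x).deriv, ih]
    simp only [add_assoc]

theorem iteratedDeriv_taylorForm_apply_zero (hf : Continuous f) {n k : ℕ} (hk : k ≤ n)
    (c : ℕ → ℝ) : iteratedDeriv k (taylorForm n c f) 0 = c k := by
  obtain ⟨m, rfl⟩ := Nat.exists_eq_add_of_le' hk
  simp [iteratedDeriv_taylorForm_add hf]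

theorem iteratedDeriv_succ_taylorForm (hf : Continuous f) (n : ℕ) (c : ℕ → ℝ) :
    iteratedDeriv (n + 1) (taylorForm n c f) = f := by
  have h := iteratedDeriv_taylorForm_add hf 0 n c
  rw [zero_add] at h
  rw [iteratedDeriv_succ, h]
  exact funext fun x => (hasDerivAt_taylorForm_zero hf _ x).deriv

end TaylorForm

lemma continuous_taylorForm_param {n : ℕ} {c : ℝ → ℕ → ℝ} {f : ℝ → ℝ → ℝ}
    (hc : ∀ j ≤ n, Continuous fun p => c p j) (hf : Continuous (Function.uncurry f)) (x : ℝ) :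
    Continuous fun p => taylorForm n (c p) (f p) x := by
  refine (continuous_finsetSum _ fun j hj => ?_).add ?_
  · exact (hc j (Nat.lt_succ_iff.mp (Finset.mem_range.mp hj))).mul continuous_const
  · exact continuous_parametric_intervalIntegral_of_continuous' (by fun_prop) 0 x

lemma intervalIntegral_intervalIntegral_eq_repeatedPrimitive {g : ℝ → ℝ → ℝ}
    (hg : Continuous (Function.uncurry g)) (m n : ℕ) (x y : ℝ) :
    ∫ η in (0:ℝ)..x, ∫ τ in (0:ℝ)..y, (x - η) ^ m / m ! * ((y - τ) ^ n / n !) * g η τ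
      = repeatedPrimitive n (fun τ => repeatedPrimitive m (fun η => g η τ) x) y := by
  have hF : Continuous (Function.uncurry fun η τ =>
      (x - η) ^ m / m ! * ((y - τ) ^ n / n !) * g η τ) := by
    change Continuous fun p : ℝ × ℝ => (x - p.1) ^ m / m ! * ((y - p.2) ^ n / n !) * g p.1 p.2
    have := hg
    fun_prop
  rw [MeasureTheory.intervalIntegral_intervalIntegral_swap ((hF.continuousOn.integrableOn_compact
    (isCompact_uIcc.prod isCompact_uIcc)).mono_set
      (Set.prod_mono Set.uIoc_subset_uIcc Set.uIoc_subset_uIcc))]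
  refine integral_congr fun τ _ => ?_
  simp only [repeatedPrimitive, ← integral_const_mul]
  congr 1 with η
  ring

lemma goursatFormula_eq_taylorForm {g : ℝ → ℝ → ℝ} (hg : Continuous (Function.uncurry g))
    {Z4 : ℕ → ℝ → ℝ} (hZ4 : ∀ i ≤ 1, Continuous (Z4 i)) (Z : ℕ → ℕ → ℝ)
    (Z2 : ℕ → ℝ → ℝ) (x₁ x₂ : ℝ) :
    (∑ i ∈ Finset.range 2, ∑ j ∈ Finset.range 4,
        x₁ ^ i / (Nat.factorial i : ℝ) * (x₂ ^ j / (Nat.factorial j : ℝ)) * Z i j)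
      + (∑ j ∈ Finset.range 4, x₂ ^ j / (Nat.factorial j : ℝ) *
          ∫ η in (0:ℝ)..x₁, (x₁ - η) * Z2 j η)
      + (∑ i ∈ Finset.range 2, x₁ ^ i / (Nat.factorial i : ℝ) *
          ∫ τ in (0:ℝ)..x₂, (x₂ - τ) ^ 3 / 6 * Z4 i τ)
      + (∫ η in (0:ℝ)..x₁, ∫ τ in (0:ℝ)..x₂,
          (x₁ - η) * ((x₂ - τ) ^ 3 / 6) * g η τ)
      = taylorForm 3 (fun j => taylorForm 1 (fun i => Z i j) (Z2 j) x₁)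
          (fun τ => taylorForm 1 (fun i => Z4 i τ) (fun η => g η τ) x₁) x₂ := by
  have hK : Continuous fun τ => repeatedPrimitive 1 (fun η => g η τ) x₁ :=
    continuous_parametric_intervalIntegral_of_continuous' (by fun_prop) 0 x₁
  have hfubini := intervalIntegral_intervalIntegral_eq_repeatedPrimitive hg 1 3 x₁ x₂
  simp only [taylorForm, Finset.sum_range_succ, Finset.sum_range_zero, zero_add, pow_zero,
    pow_one, factorial_zero, factorial_one, cast_one, div_one, mul_one] at hfubini ⊢
  have hZ40 := hZ4 0 zero_le_one
  have hZ41 := hZ4 1 le_rfl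
  rw [repeatedPrimitive_add (f := fun τ => Z4 0 τ + Z4 1 τ * x₁) (by fun_prop) hK,
    repeatedPrimitive_add hZ40 (g := fun τ => Z4 1 τ * x₁) (by fun_prop),
    repeatedPrimitive_mul_const, ← hfubini]
  simp only [repeatedPrimitive, pow_one, factorial_one, cast_one, div_one]
  norm_num [factorial]
  ring

theorem stmt_11 (g : ℝ → ℝ → ℝ) (hg : Continuous (fun p : ℝ × ℝ => g p.1 p.2))
    (Z : ℕ → ℕ → ℝ) (Z2 : ℕ → ℝ → ℝ) (Z4 : ℕ → ℝ → ℝ)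
    (hZ2 : ∀ j ≤ 3, Continuous (Z2 j)) (hZ4 : ∀ i ≤ 1, Continuous (Z4 i))
    (u : ℝ → ℝ → ℝ)
    (hu : ∀ x₁ x₂ : ℝ, u x₁ x₂ =
      (∑ i ∈ Finset.range 2, ∑ j ∈ Finset.range 4,
        x₁ ^ i / (Nat.factorial i : ℝ) * (x₂ ^ j / (Nat.factorial j : ℝ)) * Z i j)
      + (∑ j ∈ Finset.range 4, x₂ ^ j / (Nat.factorial j : ℝ) *
          ∫ η in (0:ℝ)..x₁, (x₁ - η) * Z2 j η)
      + (∑ i ∈ Finset.range 2, x₁ ^ i / (Nat.factorial i : ℝ) *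
          ∫ τ in (0:ℝ)..x₂, (x₂ - τ) ^ 3 / 6 * Z4 i τ)
      + ∫ η in (0:ℝ)..x₁, ∫ τ in (0:ℝ)..x₂,
          (x₁ - η) * ((x₂ - τ) ^ 3 / 6) * g η τ) :
    (∀ x₁ x₂ : ℝ, Dmix 2 4 u x₁ x₂ = g x₁ x₂) ∧
    (∀ i ≤ 1, ∀ j ≤ 3, Dmix i j u 0 0 = Z i j) ∧
    (∀ j ≤ 3, ∀ x₁ : ℝ, Dmix 2 j u x₁ 0 = Z2 j x₁) ∧
    (∀ i ≤ 1, ∀ x₂ : ℝ, Dmix i 4 u 0 x₂ = Z4 i x₂) := by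
  have hgx : ∀ y, Continuous fun η => g η y := fun y => by fun_prop
  have hW : ∀ s, Continuous fun τ => taylorForm 1 (fun i => Z4 i τ) (fun η => g η τ) s :=
    continuous_taylorForm_param hZ4 (by fun_prop)
  have hu' : u = fun s => taylorForm 3 (fun j => taylorForm 1 (fun i => Z i j) (Z2 j) s)
      (fun τ => taylorForm 1 (fun i => Z4 i τ) (fun η => g η τ) s) :=
    funext fun s => funext fun y => (hu s y).trans (goursatFormula_eq_taylorForm hg hZ4 Z Z2 s y)
  have hD4 : ∀ y, (fun s => iteratedDeriv 4 (u s) y)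
      = taylorForm 1 (fun i => Z4 i y) (fun η => g η y) :=
    fun y => funext fun s => by rw [hu', iteratedDeriv_succ_taylorForm (hW s)]
  have hD : ∀ j ≤ 3, (fun s => iteratedDeriv j (u s) 0) = taylorForm 1 (fun i => Z i j) (Z2 j) :=
    fun j hj => funext fun s => by rw [hu', iteratedDeriv_taylorForm_apply_zero (hW s) hj]
  refine ⟨fun x₁ x₂ => ?_, fun i hi j hj => ?_, fun j hj x₁ => ?_, fun i hi x₂ => ?_⟩
  · simp only [Dmix, hD4]
    exact congrFun (iteratedDeriv_succ_taylorForm (hgx x₂) 1 _) x₁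
  · simp only [Dmix, hD j hj]
    exact iteratedDeriv_taylorForm_apply_zero (hZ2 j hj) hi _
  · simp only [Dmix, hD j hj]
    exact congrFun (iteratedDeriv_succ_taylorForm (hZ2 j hj) 1 _) x₁
  · simp only [Dmix, hD4]
    exact iteratedDeriv_taylorForm_apply_zero (hgx x₂) hi _
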